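/- arXiv:2003.05984 — 4 statements merged into one kernel-verified Lean document; each statement's English description precedes it below -/
import Mathlib

section
/- Let ŝ be a unit vector in ℝ³ and let B be a measurable subset of the unit sphere S² with normalized surface measure σ (so σ(S²) = 1). If σ(B) = η, then ∫_B |n·ŝ| dσ(n) ≥ η²/2. -/
open MeasureTheory
open MeasureTheory Metric Set Real
open scoped RealInnerProductSpace ENNReal Pointwise

/-- The normalized (total mass one) rotation-invariant surface measure on the unit sphere
`S² ⊂ ℝ³`, obtained by normalizing the surface measure induced by the Lebesgue measure. -/
noncomputable def sphereMeasure : Measure (Metric.sphere (0 : EuclideanSpace ℝ (Fin 3)) 1) :=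
  ((volume : Measure (EuclideanSpace ℝ (Fin 3))).toSphere Set.univ)⁻¹ •
    (volume : Measure (EuclideanSpace ℝ (Fin 3))).toSphere

lemma euc_norm_sq {k : ℕ} (z : EuclideanSpace ℝ (Fin k)) : ‖z‖ ^ 2 = ∑ i, (z i) ^ 2 := by
  rw [EuclideanSpace.norm_eq, Real.sq_sqrt (by positivity)]
  simp [sq_abs]

lemma gamma_two : Real.Gamma 2 = 1 := by
  rw [(by norm_num : (2:ℝ) = 1 + 1), Real.Gamma_add_one one_ne_zero, Real.Gamma_one, mul_one]

lemma euc2_ball_vol (ρ : ℝ) (hρ : 0 ≤ ρ) :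
    volume (ball (0 : EuclideanSpace ℝ (Fin 2)) (Real.sqrt ρ)) = ENNReal.ofReal (π * ρ) := by
  rw [EuclideanSpace.volume_ball]
  simp only [Fintype.card_fin]
  have h2 : ((2:ℕ):ℝ)/2 + 1 = 2 := by norm_num
  rw [Real.sq_sqrt Real.pi_nonneg, h2, gamma_two, div_one,
    ← ENNReal.ofReal_pow (Real.sqrt_nonneg _), Real.sq_sqrt hρ,
    ← ENNReal.ofReal_mul hρ, mul_comm]

lemma sum_sq_measurable {k : ℕ} : Measurable (fun y : Fin k → ℝ => ∑ i, (y i)^2) := by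
  exact Finset.measurable_sum _ (fun i _ => (measurable_pi_apply i).pow_const 2)

lemma sec_vol (t : ℝ) (ht : 0 < t) (ht1 : t ≤ 1) (a : ℝ) :
    volume {y : Fin 2 → ℝ | a^2 ≤ t^2*(a^2 + ∑ i, (y i)^2) ∧ a^2 + ∑ i, (y i)^2 < 1}
      = ENNReal.ofReal (π * (1 - a^2/t^2)) := by
  have e2 := EuclideanSpace.volume_preserving_symm_measurableEquiv_toLp (Fin 2)
  set r : ℝ := a^2*(1-t^2)/t^2 with hr
  set R : ℝ := 1 - a^2 with hR
  have h1t : 0 ≤ 1 - t^2 := by nlinarith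
  have hr0 : 0 ≤ r := div_nonneg (mul_nonneg (sq_nonneg a) h1t) (by positivity)
  have hset : {y : Fin 2 → ℝ | a^2 ≤ t^2*(a^2 + ∑ i, (y i)^2) ∧ a^2 + ∑ i, (y i)^2 < 1}
      = {y : Fin 2 → ℝ | r ≤ ∑ i, (y i)^2 ∧ ∑ i, (y i)^2 < R} := by
    ext y
    simp only [mem_setOf_eq, hr, hR]
    constructor
    · rintro ⟨h1, h2⟩
      refine ⟨by rw [div_le_iff₀ (by positivity)]; nlinarith, by linarith⟩
    · rintro ⟨h1, h2⟩
      rw [div_le_iff₀ (by positivity)] at h1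
      exact ⟨by nlinarith, by linarith⟩
  have hmeas : MeasurableSet {y : Fin 2 → ℝ | r ≤ ∑ i, (y i)^2 ∧ ∑ i, (y i)^2 < R} :=
    (measurableSet_le measurable_const sum_sq_measurable).inter
      (measurableSet_lt sum_sq_measurable measurable_const)
  rw [hset, ← e2.measure_preimage hmeas.nullMeasurableSet]
  have hpre : (MeasurableEquiv.toLp 2 (Fin 2 → ℝ)).symm ⁻¹'
      {y : Fin 2 → ℝ | r ≤ ∑ i, (y i)^2 ∧ ∑ i, (y i)^2 < R}
      = ball (0 : EuclideanSpace ℝ (Fin 2)) (Real.sqrt R) \ ball 0 (Real.sqrt r) := by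
    ext z
    have hz : ∑ i, ((MeasurableEquiv.toLp 2 (Fin 2 → ℝ)).symm z) i ^ 2 = ‖z‖^2 := by
      rw [euc_norm_sq]; rfl
    simp only [mem_preimage, mem_setOf_eq, hz, mem_diff, mem_ball_zero_iff, not_lt]
    rw [Real.lt_sqrt (norm_nonneg z), Real.sqrt_le_iff, and_comm]
    simp [norm_nonneg z, and_comm]
  rw [hpre]
  rcases lt_or_ge r R with hlt | hge
  · have hsub : ball (0 : EuclideanSpace ℝ (Fin 2)) (Real.sqrt r)
        ⊆ ball 0 (Real.sqrt R) := ball_subset_ball (Real.sqrt_le_sqrt hlt.le)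
    rw [measure_diff hsub measurableSet_ball.nullMeasurableSet measure_ball_lt_top.ne,
      euc2_ball_vol R (hr0.trans hlt.le), euc2_ball_vol r hr0,
      ← ENNReal.ofReal_sub _ (by positivity)]
    congr 1
    rw [hr, hR]
    field_simp
    ring
  · have hempty : ball (0 : EuclideanSpace ℝ (Fin 2)) (Real.sqrt R) \ ball 0 (Real.sqrt r) = ∅ := by
      rw [diff_eq_empty]
      exact ball_subset_ball (Real.sqrt_le_sqrt hge)
    rw [hempty, measure_empty]
    symm
    rw [ENNReal.ofReal_eq_zero]
    rw [hr, hR] at hge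
    rw [le_div_iff₀ (by positivity)] at hge
    have : t^2 ≤ a^2 := by nlinarith
    have : 1 ≤ a^2/t^2 := by rw [le_div_iff₀ (by positivity)]; linarith
    exact mul_nonpos_of_nonneg_of_nonpos Real.pi_pos.le (by linarith)

lemma lint_g (t : ℝ) (ht : 0 < t) :
    ∫⁻ a : ℝ, ENNReal.ofReal (π * (1 - a^2/t^2)) = ENNReal.ofReal (π * (4/3) * t) := by
  rw [← lintegral_add_compl (fun a : ℝ => ENNReal.ofReal (π * (1 - a^2/t^2)))
    (measurableSet_Icc (a := -t) (b := t))]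
  have hzero : ∫⁻ a in (Icc (-t) t)ᶜ, ENNReal.ofReal (π * (1 - a^2/t^2)) = 0 := by
    have h0 : ∀ a ∈ (Icc (-t) t)ᶜ,
        ENNReal.ofReal (π * (1 - a^2/t^2)) = (fun _ : ℝ => (0:ℝ≥0∞)) a := by
      intro a ha
      simp only [mem_compl_iff, mem_Icc, not_and_or, not_le] at ha
      have ht2 : t^2 < a^2 := by rcases ha with h | h <;> nlinarith
      rw [ENNReal.ofReal_eq_zero]
      apply mul_nonpos_of_nonneg_of_nonpos Real.pi_pos.le
      have : 1 < a^2/t^2 := by rw [lt_div_iff₀ (by positivity)]; linarith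
      linarith
    rw [setLIntegral_congr_fun measurableSet_Icc.compl h0, lintegral_zero]
  rw [hzero, add_zero]
  rw [← ofReal_integral_eq_lintegral_ofReal]
  · congr 1
    rw [MeasureTheory.integral_Icc_eq_integral_Ioc,
      ← intervalIntegral.integral_of_le (by linarith : -t ≤ t)]
    have h1 : ∀ a : ℝ, π*(1-a^2/t^2) = π - (π/t^2) * a^2 := fun a => by field_simp
    simp_rw [h1]
    rw [intervalIntegral.integral_sub intervalIntegrable_const
      ((intervalIntegral.intervalIntegrable_pow 2).const_mul (π/t^2)),
      intervalIntegral.integral_const, intervalIntegral.integral_const_mul,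
      integral_pow]
    field_simp
    ring
  · exact (continuous_const.mul
      (continuous_const.sub ((continuous_pow 2).div_const (t^2)))).integrableOn_Icc
  · refine (ae_restrict_iff' measurableSet_Icc).2 (ae_of_all _ fun a ha => ?_)
    rcases ha with ⟨h1, h2⟩
    have ha2 : a^2 ≤ t^2 := by nlinarith
    have : a^2/t^2 ≤ 1 := by rw [div_le_one (by positivity)]; linarith
    apply mul_nonneg Real.pi_pos.le
    linarith

lemma cone_vol_pi (t : ℝ) (ht : 0 < t) (ht1 : t ≤ 1) :
    volume {x : Fin 3 → ℝ | (x 0)^2 ≤ t^2 * ∑ i, (x i)^2 ∧ ∑ i, (x i)^2 < 1}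
      = ENNReal.ofReal (π * (4/3) * t) := by
  have MP := volume_preserving_piFinSuccAbove (fun _ : Fin 3 => ℝ) 0
  set W : Set (ℝ × (Fin 2 → ℝ)) :=
    {p | p.1^2 ≤ t^2*(p.1^2 + ∑ i, (p.2 i)^2) ∧ p.1^2 + ∑ i, (p.2 i)^2 < 1} with hW
  have hWm : MeasurableSet W := by
    apply MeasurableSet.inter
    · exact measurableSet_le ((measurable_fst).pow_const 2)
        ((((measurable_fst).pow_const 2).add (sum_sq_measurable.comp measurable_snd)).const_mul _)
    · exact measurableSet_lt
        (((measurable_fst).pow_const 2).add (sum_sq_measurable.comp measurable_snd)) measurable_const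
  have hset : {x : Fin 3 → ℝ | (x 0)^2 ≤ t^2 * ∑ i, (x i)^2 ∧ ∑ i, (x i)^2 < 1}
      = (MeasurableEquiv.piFinSuccAbove (fun _ : Fin 3 => ℝ) 0) ⁻¹' W := by
    ext x
    have hsum : ∑ i, (x i)^2 = (x 0)^2 + ∑ j, (x (Fin.succAbove 0 j))^2 :=
      Fin.sum_univ_succAbove (fun i => (x i)^2) 0
    simp only [mem_preimage, hW, mem_setOf_eq, MeasurableEquiv.piFinSuccAbove_apply, hsum]
    rfl
  rw [hset, MP.measure_preimage hWm.nullMeasurableSet,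
    show (volume : Measure (ℝ × (Fin 2 → ℝ))) = (volume : Measure ℝ).prod volume from rfl,
    Measure.prod_apply hWm]
  rw [show (fun a : ℝ => volume (Prod.mk a ⁻¹' W))
      = fun a : ℝ => ENNReal.ofReal (π * (1 - a^2/t^2)) from funext fun a => sec_vol t ht ht1 a]
  exact lint_g t ht

lemma cone_vol_euc (s : EuclideanSpace ℝ (Fin 3)) (hs : ‖s‖ = 1)
    (t : ℝ) (ht : 0 < t) (ht1 : t ≤ 1) :
    volume {x : EuclideanSpace ℝ (Fin 3) | |⟪x, s⟫| ≤ t * ‖x‖ ∧ ‖x‖ < 1}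
      = ENNReal.ofReal (π * (4/3) * t) := by
  -- find an orthonormal basis whose 0-th vector is `s`
  have hortho : Orthonormal ℝ (({0} : Set (Fin 3)).restrict (fun _ : Fin 3 => s)) := by
    constructor
    · intro i; exact hs
    · intro i j hij
      exact absurd (Subtype.ext (i.2.trans j.2.symm)) hij
  obtain ⟨b, hb⟩ := hortho.exists_orthonormalBasis_extension_of_card_eq
    (by simp [finrank_euclideanSpace_fin])
  have hb0 : b 0 = s := hb 0 rfl
  set Cone₀ : Set (EuclideanSpace ℝ (Fin 3)) := {y | |y 0| ≤ t * ‖y‖ ∧ ‖y‖ < 1} with hC0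
  have hC0m : MeasurableSet Cone₀ := by
    apply MeasurableSet.inter
    · exact measurableSet_le ((EuclideanSpace.proj (0 : Fin 3)).continuous.abs.measurable)
        (continuous_const.mul continuous_norm).measurable
    · exact measurableSet_lt continuous_norm.measurable measurable_const
  have hset : {x : EuclideanSpace ℝ (Fin 3) | |⟪x, s⟫| ≤ t * ‖x‖ ∧ ‖x‖ < 1}
      = ⇑b.repr ⁻¹' Cone₀ := by
    ext x
    have h1 : (b.repr x) 0 = ⟪x, s⟫ := by
      rw [b.repr_apply_apply, hb0, real_inner_comm]
    simp only [mem_preimage, hC0, mem_setOf_eq, h1, LinearIsometryEquiv.norm_map]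
  rw [hset, b.measurePreserving_repr.measure_preimage hC0m.nullMeasurableSet]
  -- transfer to the pi space
  have e3 := EuclideanSpace.volume_preserving_symm_measurableEquiv_toLp (Fin 3)
  have hmeas : MeasurableSet {x : Fin 3 → ℝ | (x 0)^2 ≤ t^2 * ∑ i, (x i)^2 ∧ ∑ i, (x i)^2 < 1} := by
    apply MeasurableSet.inter
    · exact measurableSet_le ((measurable_pi_apply 0).pow_const 2) (sum_sq_measurable.const_mul _)
    · exact measurableSet_lt sum_sq_measurable measurable_const
  have hpre : Cone₀ = (MeasurableEquiv.toLp 2 (Fin 3 → ℝ)).symm ⁻¹'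
      {x : Fin 3 → ℝ | (x 0)^2 ≤ t^2 * ∑ i, (x i)^2 ∧ ∑ i, (x i)^2 < 1} := by
    ext z
    have hz : ∑ i, ((MeasurableEquiv.toLp 2 (Fin 3 → ℝ)).symm z) i ^ 2 = ‖z‖^2 := by
      rw [euc_norm_sq]; rfl
    have hz0 : ((MeasurableEquiv.toLp 2 (Fin 3 → ℝ)).symm z) 0 = z 0 := rfl
    simp only [hC0, mem_setOf_eq, mem_preimage, hz, hz0]
    constructor
    · rintro ⟨h1, h2⟩
      refine ⟨?_, ?_⟩
      · have := pow_le_pow_iff_left₀ (abs_nonneg (z 0)) (by positivity : (0:ℝ) ≤ t * ‖z‖)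
          (two_ne_zero) |>.2 h1
        calc (z 0)^2 = |z 0|^2 := (sq_abs _).symm
          _ ≤ (t * ‖z‖)^2 := this
          _ = t^2 * ‖z‖^2 := by ring
      · calc ‖z‖^2 < 1^2 := by
              rw [pow_lt_pow_iff_left₀ (norm_nonneg z) zero_le_one two_ne_zero]; exact h2
          _ = 1 := one_pow 2
    · rintro ⟨h1, h2⟩
      have hn : ‖z‖^2 < 1 := by simpa using h2
      have hnorm : ‖z‖ < 1 := by
        rw [← pow_lt_pow_iff_left₀ (norm_nonneg z) zero_le_one two_ne_zero]; simpa using hn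
      refine ⟨?_, hnorm⟩
      rw [← pow_le_pow_iff_left₀ (abs_nonneg (z 0)) (by positivity : (0:ℝ) ≤ t * ‖z‖) two_ne_zero]
      calc |z 0|^2 = (z 0)^2 := sq_abs _
        _ ≤ t^2 * ‖z‖^2 := h1
        _ = (t * ‖z‖)^2 := by ring
  rw [hpre, e3.measure_preimage hmeas.nullMeasurableSet]
  exact cone_vol_pi t ht ht1

lemma band_measurable (s : EuclideanSpace ℝ (Fin 3)) (t : ℝ) :
    MeasurableSet {n : Metric.sphere (0 : EuclideanSpace ℝ (Fin 3)) 1 |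
      |⟪(n : EuclideanSpace ℝ (Fin 3)), s⟫| ≤ t} := by
  have hc : Continuous fun n : Metric.sphere (0 : EuclideanSpace ℝ (Fin 3)) 1 =>
      |⟪(n : EuclideanSpace ℝ (Fin 3)), s⟫| :=
    (continuous_subtype_val.inner continuous_const).abs
  exact measurableSet_le hc.measurable measurable_const

lemma band_toSphere (s : EuclideanSpace ℝ (Fin 3)) (hs : ‖s‖ = 1)
    (t : ℝ) (ht : 0 < t) (ht1 : t ≤ 1) :
    (volume : Measure (EuclideanSpace ℝ (Fin 3))).toSphere
        {n : Metric.sphere (0 : EuclideanSpace ℝ (Fin 3)) 1 |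
          |⟪(n : EuclideanSpace ℝ (Fin 3)), s⟫| ≤ t}
      = 3 * ENNReal.ofReal (π * (4/3) * t) := by
  rw [Measure.toSphere_apply' _ (band_measurable s t)]
  have hdim : (Module.finrank ℝ (EuclideanSpace ℝ (Fin 3)) : ℝ≥0∞) = 3 := by
    rw [finrank_euclideanSpace_fin]; norm_num
  rw [hdim]
  congr 1
  have hset : Ioo (0:ℝ) 1 • (Subtype.val '' {n : Metric.sphere (0 : EuclideanSpace ℝ (Fin 3)) 1 |
        |⟪(n : EuclideanSpace ℝ (Fin 3)), s⟫| ≤ t})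
      = {x : EuclideanSpace ℝ (Fin 3) | |⟪x, s⟫| ≤ t * ‖x‖ ∧ ‖x‖ < 1} \ {0} := by
    ext x
    rw [mem_diff, Set.mem_smul]
    constructor
    · rintro ⟨r, hr, y, hy, rfl⟩
      obtain ⟨n, hn, rfl⟩ := hy
      have hn1 : ‖(n : EuclideanSpace ℝ (Fin 3))‖ = 1 := norm_eq_of_mem_sphere n
      have hnx : ‖r • (n : EuclideanSpace ℝ (Fin 3))‖ = r := by
        rw [norm_smul, hn1, mul_one, Real.norm_eq_abs, abs_of_pos hr.1]
      refine ⟨⟨?_, by rw [hnx]; exact hr.2⟩, ?_⟩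
      · rw [real_inner_smul_left, abs_mul, abs_of_pos hr.1, hnx]
        rw [mul_comm t r]
        exact mul_le_mul_of_nonneg_left hn hr.1.le
      · simp only [mem_singleton_iff]
        intro h0
        rw [h0, norm_zero] at hnx
        exact hr.1.ne hnx
    · rintro ⟨⟨h1, h2⟩, hx0⟩
      have hx0' : x ≠ 0 := by simpa using hx0
      have hxn : 0 < ‖x‖ := norm_pos_iff.2 hx0'
      have hmem : ‖x‖⁻¹ • x ∈ Metric.sphere (0 : EuclideanSpace ℝ (Fin 3)) 1 := by
        rw [mem_sphere_zero_iff_norm]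
        exact norm_smul_inv_norm (𝕜 := ℝ) hx0'
      refine ⟨‖x‖, ⟨hxn, h2⟩, ‖x‖⁻¹ • x, ⟨⟨_, hmem⟩, ?_, rfl⟩, ?_⟩
      · show |⟪‖x‖⁻¹ • x, s⟫| ≤ t
        rw [real_inner_smul_left, abs_mul, abs_of_pos (inv_pos.2 hxn)]
        calc ‖x‖⁻¹ * |⟪x, s⟫| ≤ ‖x‖⁻¹ * (t * ‖x‖) :=
              mul_le_mul_of_nonneg_left h1 (inv_nonneg.2 hxn.le)
          _ = t := by field_simp
      · exact smul_inv_smul₀ hxn.ne' x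
  rw [hset, measure_diff_null (measure_singleton 0)]
  exact cone_vol_euc s hs t ht ht1

lemma band_univ (s : EuclideanSpace ℝ (Fin 3)) (hs : ‖s‖ = 1) :
    {n : Metric.sphere (0 : EuclideanSpace ℝ (Fin 3)) 1 |
      |⟪(n : EuclideanSpace ℝ (Fin 3)), s⟫| ≤ (1:ℝ)} = Set.univ := by
  ext n
  simp only [mem_setOf_eq, mem_univ, iff_true]
  calc |⟪(n : EuclideanSpace ℝ (Fin 3)), s⟫| ≤ ‖(n : EuclideanSpace ℝ (Fin 3))‖ * ‖s‖ :=
        abs_real_inner_le_norm _ _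
    _ = 1 := by rw [norm_eq_of_mem_sphere n, hs, one_mul]

lemma band_sphereMeasure (s : EuclideanSpace ℝ (Fin 3)) (hs : ‖s‖ = 1)
    (t : ℝ) (ht : 0 < t) (ht1 : t ≤ 1) :
    sphereMeasure {n : Metric.sphere (0 : EuclideanSpace ℝ (Fin 3)) 1 |
      |⟪(n : EuclideanSpace ℝ (Fin 3)), s⟫| ≤ t} = ENNReal.ofReal t := by
  have huniv : (volume : Measure (EuclideanSpace ℝ (Fin 3))).toSphere Set.univ
      = 3 * ENNReal.ofReal (π * (4/3)) := by
    rw [← band_univ s hs, band_toSphere s hs 1 one_pos le_rfl, mul_one]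
  set A : ℝ≥0∞ := ENNReal.ofReal (π * (4/3)) with hA
  have hA0 : A ≠ 0 := by
    rw [hA, Ne, ENNReal.ofReal_eq_zero, not_le]; positivity
  have hAtop : A ≠ ⊤ := ENNReal.ofReal_ne_top
  have h3A0 : (3:ℝ≥0∞) * A ≠ 0 := by simp [hA0]
  have h3Atop : (3:ℝ≥0∞) * A ≠ ⊤ := ENNReal.mul_ne_top (by norm_num) hAtop
  rw [sphereMeasure, Measure.smul_apply, smul_eq_mul, band_toSphere s hs t ht ht1, huniv]
  rw [show ENNReal.ofReal (π * (4/3) * t) = A * ENNReal.ofReal t from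
    by rw [hA, ← ENNReal.ofReal_mul (by positivity)]]
  rw [show ((3:ℝ≥0∞)*A)⁻¹ * (3 * (A * ENNReal.ofReal t))
      = ((3*A)⁻¹ * (3*A)) * ENNReal.ofReal t from by ring,
    ENNReal.inv_mul_cancel h3A0 h3Atop, one_mul]

lemma sphereMeasure_univ : sphereMeasure (Set.univ :
    Set (Metric.sphere (0 : EuclideanSpace ℝ (Fin 3)) 1)) = 1 := by
  have hs : ‖(EuclideanSpace.single 0 (1:ℝ) : EuclideanSpace ℝ (Fin 3))‖ = 1 := by
    simp [EuclideanSpace.norm_single]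
  rw [← band_univ _ hs, band_sphereMeasure _ hs 1 one_pos le_rfl, ENNReal.ofReal_one]

/-- for a unit vector `ŝ ∈ ℝ³` and a measurable subset `B ⊆ S²` with
normalized measure `η`, `∫_B |n·ŝ| dσ(n) ≥ η²/2`. -/
theorem stmt_4 (s : EuclideanSpace ℝ (Fin 3)) (hs : ‖s‖ = 1)
    (B : Set (Metric.sphere (0 : EuclideanSpace ℝ (Fin 3)) 1)) (hB : MeasurableSet B)
    (η : ℝ) (hη0 : 0 ≤ η) (hη : sphereMeasure B = ENNReal.ofReal η) :
    η^2 / 2 ≤ ∫ n in B, |⟪(n : EuclideanSpace ℝ (Fin 3)), s⟫| ∂sphereMeasure := by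
  set f : Metric.sphere (0 : EuclideanSpace ℝ (Fin 3)) 1 → ℝ :=
    fun n => |⟪(n : EuclideanSpace ℝ (Fin 3)), s⟫| with hf
  have hfc : Continuous f := (continuous_subtype_val.inner continuous_const).abs
  have hfm : Measurable f := hfc.measurable
  have hf1 : ∀ n, f n ≤ 1 := by
    intro n
    calc f n ≤ ‖(n : EuclideanSpace ℝ (Fin 3))‖ * ‖s‖ := abs_real_inner_le_norm _ _
      _ = 1 := by rw [norm_eq_of_mem_sphere n, hs, one_mul]
  rcases eq_or_lt_of_le hη0 with hη0' | hηpos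
  · rw [← hη0']
    norm_num
    exact setIntegral_nonneg hB (fun x _ => abs_nonneg _)
  have hη1 : η ≤ 1 := by
    rw [← ENNReal.ofReal_le_one, ← hη]
    exact (measure_mono (subset_univ B)).trans_eq sphereMeasure_univ
  -- layer cake
  have hL : ∫⁻ n in B, ENNReal.ofReal (f n) ∂sphereMeasure
      = ∫⁻ t in Ioi (0:ℝ), (sphereMeasure.restrict B) {n | t < f n} :=
    lintegral_eq_lintegral_meas_lt _ (ae_of_all _ fun n => abs_nonneg _) hfm.aemeasurable
  have hrestrict : ∀ t : ℝ, (sphereMeasure.restrict B) {n | t < f n}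
      = sphereMeasure ({n | t < f n} ∩ B) := fun t =>
    Measure.restrict_apply (measurableSet_lt measurable_const hfm)
  have key : ∀ t ∈ Ioo (0:ℝ) η,
      ENNReal.ofReal (η - t) ≤ (sphereMeasure.restrict B) {n | t < f n} := by
    rintro t ⟨ht0, htη⟩
    have hband := band_sphereMeasure s hs t ht0 (htη.le.trans hη1)
    have hsplit : sphereMeasure B ≤ sphereMeasure ({n | t < f n} ∩ B)
        + sphereMeasure {n | f n ≤ t} := by
      refine (measure_mono ?_).trans (measure_union_le _ _)
      intro n hn
      by_cases h : t < f n
      · exact Or.inl ⟨h, hn⟩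
      · exact Or.inr (not_lt.1 h)
    rw [hη, hband] at hsplit
    rw [hrestrict, ENNReal.ofReal_sub _ ht0.le]
    exact tsub_le_iff_right.2 hsplit
  have hcalc : ∫⁻ t in Ioo (0:ℝ) η, ENNReal.ofReal (η - t) = ENNReal.ofReal (η^2/2) := by
    rw [← ofReal_integral_eq_lintegral_ofReal]
    · congr 1
      rw [← MeasureTheory.integral_Ioc_eq_integral_Ioo,
        ← intervalIntegral.integral_of_le hη0]
      rw [intervalIntegral.integral_sub intervalIntegrable_const intervalIntegral.intervalIntegrable_id,
        intervalIntegral.integral_const, integral_id]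
      simp
      ring
    · exact ((continuous_const.sub continuous_id).integrableOn_Icc).mono_set Ioo_subset_Icc_self
    · refine (ae_restrict_iff' measurableSet_Ioo).2 (ae_of_all _ fun t ht => ?_)
      rcases ht with ⟨h1', h2'⟩
      simpa using sub_nonneg.2 h2'.le
  have h1 : ENNReal.ofReal (η^2/2) ≤ ∫⁻ n in B, ENNReal.ofReal (f n) ∂sphereMeasure := by
    rw [hL]
    calc ENNReal.ofReal (η^2/2) = ∫⁻ t in Ioo (0:ℝ) η, ENNReal.ofReal (η - t) := hcalc.symm
      _ ≤ ∫⁻ t in Ioo (0:ℝ) η, (sphereMeasure.restrict B) {n | t < f n} :=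
          setLIntegral_mono' measurableSet_Ioo key
      _ ≤ ∫⁻ t in Ioi (0:ℝ), (sphereMeasure.restrict B) {n | t < f n} :=
          lintegral_mono_set Ioo_subset_Ioi_self
  have hfin : ∫⁻ n in B, ENNReal.ofReal (f n) ∂sphereMeasure ≠ ⊤ := by
    refine ne_top_of_le_ne_top (by norm_num : (1:ℝ≥0∞) ≠ ⊤) ?_
    calc ∫⁻ n in B, ENNReal.ofReal (f n) ∂sphereMeasure
        ≤ ∫⁻ _ in B, 1 ∂sphereMeasure := lintegral_mono fun n => by
          rw [← ENNReal.ofReal_one]; exact ENNReal.ofReal_le_ofReal (hf1 n)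
      _ = sphereMeasure B := setLIntegral_one B
      _ ≤ sphereMeasure Set.univ := measure_mono (subset_univ B)
      _ = 1 := sphereMeasure_univ
  have hint : ∫ n in B, f n ∂sphereMeasure
      = (∫⁻ n in B, ENNReal.ofReal (f n) ∂sphereMeasure).toReal :=
    integral_eq_lintegral_of_nonneg_ae (ae_of_all _ fun n => abs_nonneg _)
      hfc.aestronglyMeasurable.restrict
  have hmono := ENNReal.toReal_mono hfin h1
  rw [ENNReal.toReal_ofReal (by positivity)] at hmono
  calc η^2/2 ≤ (∫⁻ n in B, ENNReal.ofReal (f n) ∂sphereMeasure).toReal := hmono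
    _ = ∫ n in B, f n ∂sphereMeasure := hint.symm
end

section
/- Kochen–Specker model reproduces the Born rule: for unit vectors ŝ, r̂ ∈ ℝ³, ∫_{S²} 4 (n·ŝ) 𝟙[n·ŝ ≥ 0] · 𝟙[n·r̂ ≥ 0] dσ(n) = (1 + r̂·ŝ)/2, where σ is the normalized rotation-invariant measure on the unit sphere S² ⊂ ℝ³. -/
open MeasureTheory
open scoped RealInnerProductSpace

section KSAux

open Metric Set Real Filter
open scoped ENNReal Pointwise Topology

noncomputable section

local notation "E3" => EuclideanSpace ℝ (Fin 3)
local notation "S2" => Metric.sphere (0 : EuclideanSpace ℝ (Fin 3)) 1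

/-- An isometry of `E3` induces a homeomorphism of the unit sphere. -/
def sphereHomeo (e : E3 ≃ₗᵢ[ℝ] E3) : S2 ≃ₜ S2 where
  toFun := fun n => ⟨e n, mem_sphere_zero_iff_norm.2
    (by rw [e.norm_map]; exact mem_sphere_zero_iff_norm.1 n.2)⟩
  invFun := fun n => ⟨e.symm n, mem_sphere_zero_iff_norm.2
    (by rw [e.symm.norm_map]; exact mem_sphere_zero_iff_norm.1 n.2)⟩
  left_inv := fun n => by ext : 1; simp
  right_inv := fun n => by ext : 1; simp
  continuous_toFun := Continuous.subtype_mk (e.continuous.comp continuous_subtype_val) _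
  continuous_invFun := Continuous.subtype_mk (e.symm.continuous.comp continuous_subtype_val) _

/-- An isometry of `E3` induces a measurable equivalence of the unit sphere. -/
def sphereEquiv (e : E3 ≃ₗᵢ[ℝ] E3) : S2 ≃ᵐ S2 := (sphereHomeo e).toMeasurableEquiv

lemma sphereEquiv_coe (e : E3 ≃ₗᵢ[ℝ] E3) (n : S2) :
    ((sphereEquiv e n : S2) : E3) = e n := rfl

lemma smul_image_comm (e : E3 ≃ₗᵢ[ℝ] E3) (B : Set E3) :
    (Ioo (0:ℝ) 1) • (⇑e '' B) = ⇑e '' ((Ioo (0:ℝ) 1) • B) := by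
  ext x
  simp only [Set.mem_smul_set, Set.mem_image]
  constructor
  · rintro ⟨c, hc, -, ⟨b, hb, rfl⟩, rfl⟩
    exact ⟨c • b, ⟨c, hc, b, hb, rfl⟩, by rw [e.map_smul c b]⟩
  · rintro ⟨-, ⟨c, hc, b, hb, rfl⟩, rfl⟩
    exact ⟨c, hc, e b, ⟨b, hb, rfl⟩, by rw [e.map_smul c b]⟩

lemma vol_image (e : E3 ≃ₗᵢ[ℝ] E3) (C : Set E3) : volume (⇑e '' C) = volume C := by
  have h1 : ⇑e '' C = ⇑e.symm ⁻¹' C := by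
    ext x
    constructor
    · rintro ⟨b, hb, rfl⟩; simpa using hb
    · intro h; exact ⟨e.symm x, h, by simp⟩
  have h2 := MeasurableEquiv.map_apply (μ := (volume : Measure E3))
    (e.symm.toHomeomorph.toMeasurableEquiv) C
  simp only [Homeomorph.toMeasurableEquiv_coe, LinearIsometryEquiv.coe_toHomeomorph] at h2
  rw [h1, ← h2, e.symm.measurePreserving.map_eq]

lemma map_toSphere (e : E3 ≃ₗᵢ[ℝ] E3) :
    (volume : Measure E3).toSphere.map (sphereEquiv e) = (volume : Measure E3).toSphere := by
  refine Measure.ext fun A hA => ?_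
  rw [(sphereEquiv e).map_apply]
  rw [Measure.toSphere_apply' _ ((sphereEquiv e).measurable hA), Measure.toSphere_apply' _ hA]
  congr 1
  have him : (Subtype.val '' ((sphereEquiv e) ⁻¹' A) : Set E3) = ⇑e.symm '' (Subtype.val '' A) := by
    have h2 : (sphereEquiv e) ⁻¹' A = (sphereEquiv e).symm '' A := by
      rw [← MeasurableEquiv.image_symm]
    rw [h2, ← Set.image_comp, ← Set.image_comp]
    rfl
  rw [him, smul_image_comm e.symm, vol_image]

lemma gamma_52 : Real.Gamma ((3:ℝ) / 2 + 1) = 3 / 4 * √π := by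
  rw [Real.Gamma_add_one (by norm_num)]
  have : (3:ℝ)/2 = 1/2 + 1 := by norm_num
  rw [this, Real.Gamma_add_one (by norm_num), Real.Gamma_one_half_eq]
  ring

lemma vol_ball3 : volume (Metric.ball (0 : E3) 1) = ENNReal.ofReal (4 * π / 3) := by
  rw [EuclideanSpace.volume_ball]
  simp only [Fintype.card_fin]
  rw [show ((3:ℕ):ℝ) / 2 + 1 = (3:ℝ)/2 + 1 by norm_num, gamma_52]
  have hs : √π ≠ 0 := by positivity
  have : √π ^ 3 / (3 / 4 * √π) = 4 * π / 3 := by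
    rw [pow_succ, sq_sqrt pi_nonneg]
    field_simp
  rw [this]
  simp

lemma toSphere_univ3 :
    (volume : Measure E3).toSphere Set.univ = ENNReal.ofReal (4 * π) := by
  rw [Measure.toSphere_apply_univ, vol_ball3]
  have : Module.finrank ℝ E3 = 3 := by simp [finrank_euclideanSpace]
  rw [this]
  rw [show ((3:ℕ) : ℝ≥0∞) = ENNReal.ofReal 3 by simp, ← ENNReal.ofReal_mul (by norm_num)]
  congr 1
  ring

instance sphereMeasure_prob : IsProbabilityMeasure sphereMeasure := by
  constructor
  rw [sphereMeasure, Measure.smul_apply, toSphere_univ3, smul_eq_mul,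
    ENNReal.inv_mul_cancel (by positivity) ENNReal.ofReal_ne_top]

lemma integral_comp_sphereEquiv (e : E3 ≃ₗᵢ[ℝ] E3) (f : S2 → ℝ) :
    ∫ n, f (sphereEquiv e n) ∂sphereMeasure = ∫ n, f n ∂sphereMeasure := by
  have h : MeasurePreserving (sphereEquiv e) sphereMeasure sphereMeasure := by
    refine ⟨(sphereEquiv e).measurable, ?_⟩
    rw [sphereMeasure, Measure.map_smul, map_toSphere]
  exact h.integral_comp' f

lemma measurable_innerS (v : EuclideanSpace ℝ (Fin 3)) :
    Measurable fun n : S2 => ⟪(n : E3), v⟫ :=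
  (Continuous.inner continuous_subtype_val continuous_const).measurable

lemma abs_innerS_le (v : EuclideanSpace ℝ (Fin 3)) (n : S2) : |⟪(n : E3), v⟫| ≤ ‖v‖ := by
  have := abs_real_inner_le_norm (n : E3) v
  rwa [mem_sphere_zero_iff_norm.1 n.2, one_mul] at this

lemma integrable_bdd {f : S2 → ℝ} (hm : Measurable f) {C : ℝ} (h : ∀ n, |f n| ≤ C) :
    Integrable f sphereMeasure :=
  (integrable_const C).mono' hm.aestronglyMeasurable
    (Filter.Eventually.of_forall fun n => by
      simpa [Real.norm_eq_abs] using h n)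

lemma ae_inner_ne_zero (r : EuclideanSpace ℝ (Fin 3)) (hr : ‖r‖ = 1) :
    ∀ᵐ (n : S2) ∂sphereMeasure, ⟪(n : E3), r⟫ ≠ 0 := by
  have hZm : MeasurableSet {n : S2 | ⟪(n : E3), r⟫ = 0} :=
    measurable_innerS r (measurableSet_singleton 0)
  have hsub : (Set.Ioo (0:ℝ) 1) • (Subtype.val '' {n : S2 | ⟪(n : E3), r⟫ = 0})
      ⊆ ((ℝ ∙ r)ᗮ : Submodule ℝ E3) := by
    rintro x ⟨c, -, -, ⟨n, hn, rfl⟩, rfl⟩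
    exact Submodule.smul_mem _ c
      (Submodule.mem_orthogonal_singleton_iff_inner_left.2 hn)
  have hvol : volume ((Set.Ioo (0:ℝ) 1) • (Subtype.val '' {n : S2 | ⟪(n : E3), r⟫ = 0})) = 0 := by
    refine measure_mono_null hsub (Measure.addHaar_submodule _ _ ?_)
    intro htop
    have : r ∈ (ℝ ∙ r)ᗮ := htop ▸ Submodule.mem_top
    have h0 : ⟪r, r⟫ = 0 := Submodule.mem_orthogonal_singleton_iff_inner_left.1 this
    rw [real_inner_self_eq_norm_sq, hr] at h0
    norm_num at h0
  have hσ' : (volume : Measure E3).toSphere {n : S2 | ⟪(n : E3), r⟫ = 0} = 0 := by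
    rw [Measure.toSphere_apply' _ hZm, hvol, mul_zero]
  have hσ : sphereMeasure {n : S2 | ⟪(n : E3), r⟫ = 0} = 0 := by
    rw [sphereMeasure, Measure.smul_apply, hσ', smul_eq_mul, mul_zero]
  rw [MeasureTheory.ae_iff]
  convert hσ using 2
  ext n
  simp

/-- Response function of the KS model. -/
def chiS (v : EuclideanSpace ℝ (Fin 3)) (n : S2) : ℝ := if 0 ≤ ⟪(n : E3), v⟫ then 1 else 0

/-- Positive part of the inner product. -/
def posS (v : EuclideanSpace ℝ (Fin 3)) (n : S2) : ℝ := max ⟪(n : E3), v⟫ 0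

lemma measurable_chiS (v : EuclideanSpace ℝ (Fin 3)) : Measurable (chiS v) :=
  Measurable.ite (measurableSet_le measurable_const (measurable_innerS v))
    measurable_const measurable_const

lemma measurable_posS (v : EuclideanSpace ℝ (Fin 3)) : Measurable (posS v) :=
  (measurable_innerS v).max measurable_const

lemma chiS_abs_le (v : EuclideanSpace ℝ (Fin 3)) (n : S2) : |chiS v n| ≤ 1 := by
  unfold chiS; split <;> simp

lemma posS_abs_le (v : EuclideanSpace ℝ (Fin 3)) (n : S2) : |posS v n| ≤ ‖v‖ := by
  unfold posS
  rcases le_total (⟪(n : E3), v⟫) 0 with h0 | h0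
  · rw [max_eq_right h0]; simpa using norm_nonneg v
  · rw [max_eq_left h0]; exact abs_innerS_le v n

lemma integrable_inner (v : EuclideanSpace ℝ (Fin 3)) :
    Integrable (fun n : S2 => ⟪(n : E3), v⟫) sphereMeasure :=
  integrable_bdd (measurable_innerS v) (abs_innerS_le v)

lemma integrable_posS (v : EuclideanSpace ℝ (Fin 3)) :
    Integrable (posS v) sphereMeasure :=
  integrable_bdd (measurable_posS v) (posS_abs_le v)

lemma abs_mul_chi_le {g : S2 → ℝ} {C : ℝ} (h : ∀ n, |g n| ≤ C)
    (r : EuclideanSpace ℝ (Fin 3)) (n : S2) : |g n * chiS r n| ≤ C := by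
  rw [abs_mul]
  calc |g n| * |chiS r n| ≤ C * 1 :=
        mul_le_mul (h n) (chiS_abs_le r n) (abs_nonneg _) ((abs_nonneg (g n)).trans (h n))
    _ = C := mul_one C

lemma integrable_inner_chi (v r : EuclideanSpace ℝ (Fin 3)) :
    Integrable (fun n : S2 => ⟪(n : E3), v⟫ * chiS r n) sphereMeasure :=
  integrable_bdd ((measurable_innerS v).mul (measurable_chiS r))
    (abs_mul_chi_le (abs_innerS_le v) r)

lemma integrable_posS_chi (v r : EuclideanSpace ℝ (Fin 3)) :
    Integrable (fun n : S2 => posS v n * chiS r n) sphereMeasure :=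
  integrable_bdd ((measurable_posS v).mul (measurable_chiS r))
    (abs_mul_chi_le (posS_abs_le v) r)

/-- The linear-in-`v` integral vanishes, by antipodal symmetry. -/
lemma integral_inner_zero (v : EuclideanSpace ℝ (Fin 3)) :
    ∫ n : S2, ⟪(n : E3), v⟫ ∂sphereMeasure = 0 := by
  have h := integral_comp_sphereEquiv (LinearIsometryEquiv.neg ℝ (E := E3))
    (fun n : S2 => ⟪(n : E3), v⟫)
  have h2 : ∀ n : S2,
      ⟪((sphereEquiv (LinearIsometryEquiv.neg ℝ (E := E3)) n : S2) : E3), v⟫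
        = -⟪(n : E3), v⟫ := by
    intro n
    rw [sphereEquiv_coe]
    simp [inner_neg_left]
  rw [integral_congr_ae (Filter.Eventually.of_forall h2)] at h
  rw [integral_neg] at h
  linarith

/-- The positive-part integral is the same for all unit vectors. -/
lemma integral_posS_const (v w : EuclideanSpace ℝ (Fin 3)) (hv : ‖v‖ = 1) (hw : ‖w‖ = 1) :
    ∫ n : S2, posS v n ∂sphereMeasure = ∫ n : S2, posS w n ∂sphereMeasure := by
  rcases eq_or_ne v w with rfl | hvw
  · rfl
  have hρ := Submodule.reflection_sub (hv.trans hw.symm)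
  set ρ := Submodule.reflection (ℝ ∙ (v - w))ᗮ with hρdef
  have h := integral_comp_sphereEquiv ρ (posS w)
  have h2 : ∀ n : S2, posS w (sphereEquiv ρ n) = posS v n := by
    intro n
    unfold posS
    rw [sphereEquiv_coe]
    congr 1
    calc ⟪ρ (n : E3), w⟫ = ⟪ρ (n : E3), ρ v⟫ := by rw [hρ]
      _ = ⟪(n : E3), v⟫ := ρ.inner_map_map _ _
  rw [integral_congr_ae (Filter.Eventually.of_forall h2)] at h
  exact h

/-- Integration against a direction orthogonal to `r` vanishes, by reflection symmetry. -/
lemma integral_inner_chi_perp (r w : EuclideanSpace ℝ (Fin 3)) (hw : ⟪w, r⟫ = 0) :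
    ∫ n : S2, ⟪(n : E3), w⟫ * chiS r n ∂sphereMeasure = 0 := by
  rcases eq_or_ne w 0 with rfl | hw0
  · simp [inner_zero_right]
  set ρ := Submodule.reflection (ℝ ∙ w)ᗮ with hρdef
  have hρw : ρ w = -w :=
    Submodule.reflection_mem_subspace_orthogonalComplement_eq_neg
      (Submodule.le_orthogonal_orthogonal _ (Submodule.mem_span_singleton_self w))
  have hρr : ρ r = r :=
    Submodule.reflection_mem_subspace_eq_self (Submodule.mem_orthogonal_singleton_iff_inner_right.2 hw)
  have h := integral_comp_sphereEquiv ρ (fun n : S2 => ⟪(n : E3), w⟫ * chiS r n)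
  have h2 : ∀ n : S2,
      ⟪((sphereEquiv ρ n : S2) : E3), w⟫ * chiS r (sphereEquiv ρ n)
        = -(⟪(n : E3), w⟫ * chiS r n) := by
    intro n
    have e1 : ⟪((sphereEquiv ρ n : S2) : E3), w⟫ = -⟪(n : E3), w⟫ := by
      rw [sphereEquiv_coe]
      calc ⟪ρ (n : E3), w⟫ = ⟪ρ (n : E3), ρ (-w)⟫ := by rw [map_neg, hρw, neg_neg]
        _ = ⟪(n : E3), -w⟫ := ρ.inner_map_map _ _
        _ = -⟪(n : E3), w⟫ := inner_neg_right _ _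
    have e2 : chiS r (sphereEquiv ρ n) = chiS r n := by
      have e3 : ⟪((sphereEquiv ρ n : S2) : E3), r⟫ = ⟪(n : E3), r⟫ := by
        rw [sphereEquiv_coe]
        calc ⟪ρ (n : E3), r⟫ = ⟪ρ (n : E3), ρ r⟫ := by rw [hρr]
          _ = ⟪(n : E3), r⟫ := ρ.inner_map_map _ _
      unfold chiS
      rw [e3]
    rw [e1, e2, neg_mul]
  rw [integral_congr_ae (Filter.Eventually.of_forall h2), integral_neg] at h
  linarith

lemma max_neg_zero' (x : ℝ) : max (-x) 0 = max x 0 - x := by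
  rcases le_total x 0 with h | h
  · rw [max_eq_left (neg_nonneg.2 h), max_eq_right h]; ring
  · rw [max_eq_right (neg_nonpos.2 h), max_eq_left h]; ring

lemma inner_mul_chi (v : EuclideanSpace ℝ (Fin 3)) (n : S2) :
    ⟪(n : E3), v⟫ * chiS v n = posS v n := by
  unfold chiS posS
  split
  · rename_i h
    rw [mul_one, max_eq_left h]
  · rename_i h
    rw [mul_zero, max_eq_right (le_of_not_ge h)]

/-- The inner product integrated against the half-sphere indicator. -/
lemma integral_inner_chi (s r : EuclideanSpace ℝ (Fin 3)) (hr : ‖r‖ = 1) :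
    ∫ n : S2, ⟪(n : E3), s⟫ * chiS r n ∂sphereMeasure
      = ⟪r, s⟫ * ∫ n : S2, posS r n ∂sphereMeasure := by
  set w : EuclideanSpace ℝ (Fin 3) := s - ⟪r, s⟫ • r with hwdef
  have hw : ⟪w, r⟫ = 0 := by
    rw [hwdef, inner_sub_left, real_inner_smul_left, real_inner_self_eq_norm_sq, hr,
      real_inner_comm s r]
    ring
  have hdec : ∀ n : S2, ⟪(n : E3), s⟫ * chiS r n
      = ⟪r, s⟫ * (⟪(n : E3), r⟫ * chiS r n) + ⟪(n : E3), w⟫ * chiS r n := by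
    intro n
    have : ⟪(n : E3), w⟫ = ⟪(n : E3), s⟫ - ⟪r, s⟫ * ⟪(n : E3), r⟫ := by
      rw [hwdef, inner_sub_right, real_inner_smul_right]
    rw [this]
    ring
  rw [integral_congr_ae (Filter.Eventually.of_forall hdec)]
  have i1 : Integrable (fun n : S2 => ⟪r, s⟫ * (⟪(n : E3), r⟫ * chiS r n)) sphereMeasure :=
    (integrable_inner_chi r r).const_mul _
  rw [integral_add i1 (integrable_inner_chi w r),
    integral_const_mul, integral_inner_chi_perp r w hw, add_zero]
  congr 1
  exact integral_congr_ae (Filter.Eventually.of_forall fun n => inner_mul_chi r n)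

/-- The key symmetry computation. -/
lemma integral_posS_chi (s r : EuclideanSpace ℝ (Fin 3)) (hs : ‖s‖ = 1) (hr : ‖r‖ = 1) :
    ∫ n : S2, posS s n * chiS r n ∂sphereMeasure
      = (∫ n : S2, posS r n ∂sphereMeasure) * (1 + ⟪r, s⟫) / 2 := by
  set A := ∫ n : S2, posS s n * chiS r n ∂sphereMeasure with hA
  set C := ∫ n : S2, posS r n ∂sphereMeasure with hC
  have hCs : ∫ n : S2, posS s n ∂sphereMeasure = C := integral_posS_const s r hs hr
  have hL : ∫ n : S2, ⟪(n : E3), s⟫ * chiS r n ∂sphereMeasure = ⟪r, s⟫ * C :=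
    integral_inner_chi s r hr
  have hcoe : ∀ n : S2,
      ((sphereEquiv (LinearIsometryEquiv.neg ℝ (E := EuclideanSpace ℝ (Fin 3))) n : S2) : E3)
        = -(n : E3) := fun n => rfl
  have h := integral_comp_sphereEquiv (LinearIsometryEquiv.neg ℝ (E := EuclideanSpace ℝ (Fin 3)))
    (fun n : S2 => posS s n * chiS r n)
  have hae : ∀ᵐ (n : S2) ∂sphereMeasure,
      posS s (sphereEquiv (LinearIsometryEquiv.neg ℝ (E := EuclideanSpace ℝ (Fin 3))) n)
          * chiS r (sphereEquiv (LinearIsometryEquiv.neg ℝ (E := EuclideanSpace ℝ (Fin 3))) n)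
        = (posS s n - posS s n * chiS r n)
          - (⟪(n : E3), s⟫ - ⟪(n : E3), s⟫ * chiS r n) := by
    filter_upwards [ae_inner_ne_zero r hr] with n hn
    have e1 : posS s (sphereEquiv (LinearIsometryEquiv.neg ℝ (E := EuclideanSpace ℝ (Fin 3))) n)
        = posS s n - ⟪(n : E3), s⟫ := by
      unfold posS
      rw [hcoe n, inner_neg_left]
      exact max_neg_zero' _
    have e2 : chiS r (sphereEquiv (LinearIsometryEquiv.neg ℝ (E := EuclideanSpace ℝ (Fin 3))) n)
        = 1 - chiS r n := by
      unfold chiS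
      rw [hcoe n, inner_neg_left]
      rcases lt_or_gt_of_ne hn with h0 | h0
      · rw [if_pos (by linarith), if_neg (by linarith)]; ring
      · rw [if_neg (by linarith), if_pos (by linarith)]; ring
    rw [e1, e2]
    ring
  rw [integral_congr_ae hae] at h
  have i1 : Integrable (fun n : S2 => posS s n - posS s n * chiS r n) sphereMeasure :=
    (integrable_posS s).sub (integrable_posS_chi s r)
  have i2 : Integrable (fun n : S2 => ⟪(n : E3), s⟫ - ⟪(n : E3), s⟫ * chiS r n) sphereMeasure :=
    (integrable_inner s).sub (integrable_inner_chi s r)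
  rw [integral_sub i1 i2,
    integral_sub (integrable_posS s) (integrable_posS_chi s r),
    integral_sub (integrable_inner s) (integrable_inner_chi s r),
    integral_inner_zero, hCs, hL] at h
  linarith [h, mul_comm C (⟪r, s⟫ : ℝ)]

lemma integral_x_exp : ∫ x in Ioi (0:ℝ), x * rexp (-x^2) = 1/2 := by
  have hderiv : ∀ x ∈ Ici (0:ℝ), HasDerivAt (fun t : ℝ => -rexp (-t^2)/2) (x * rexp (-x^2)) x := by
    intro x _
    have h1 : HasDerivAt (fun t : ℝ => -t^2) (-(2*x)) x := by
      simpa [Pi.neg_def] using ((hasDerivAt_pow 2 x).neg)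
    have h2 := (h1.exp).fun_neg.div_const 2
    refine h2.congr_deriv ?_
    ring
  have hint : IntegrableOn (fun x : ℝ => x * rexp (-x^2)) (Ioi 0) := by
    have := (integrable_mul_exp_neg_mul_sq (b := 1) one_pos).integrableOn (s := Ioi 0)
    refine this.congr_fun (fun x _ => by norm_num) measurableSet_Ioi
  have htend : Tendsto (fun t : ℝ => -rexp (-t^2)/2) atTop (𝓝 0) := by
    have h0 : Tendsto (fun t : ℝ => rexp (-t^2)) atTop (𝓝 0) :=
      tendsto_exp_neg_atTop_nhds_zero.comp (tendsto_pow_atTop two_ne_zero)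
    have := (h0.neg).div_const 2
    simpa using this
  have := integral_Ioi_of_hasDerivAt_of_tendsto' hderiv hint htend
  rw [this]
  norm_num

lemma integral_x3_exp : ∫ x in Ioi (0:ℝ), x^2 * (x * rexp (-x^2)) = 1/2 := by
  have hderiv : ∀ x ∈ Ici (0:ℝ),
      HasDerivAt (fun t : ℝ => -((t^2+1) * rexp (-t^2))/2) (x^2 * (x * rexp (-x^2))) x := by
    intro x _
    have h1 : HasDerivAt (fun t : ℝ => -t^2) (-(2*x)) x := by
      simpa [Pi.neg_def] using ((hasDerivAt_pow 2 x).neg)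
    have h2 : HasDerivAt (fun t : ℝ => t^2+1) (2*x) x := by
      simpa using ((hasDerivAt_pow 2 x).add_const 1)
    have h3 := ((h2.mul h1.exp).fun_neg.div_const 2)
    refine h3.congr_deriv ?_
    ring
  have hint : IntegrableOn (fun x : ℝ => x^2 * (x * rexp (-x^2))) (Ioi 0) := by
    have h := (integrable_rpow_mul_exp_neg_mul_sq (b := 1) one_pos
      (s := 3) (by norm_num)).integrableOn (s := Ioi 0)
    refine h.congr_fun (fun x hx => ?_) measurableSet_Ioi
    simp only []
    rw [show (3:ℝ) = ((3:ℕ):ℝ) by norm_num, Real.rpow_natCast]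
    ring_nf
  have htend : Tendsto (fun t : ℝ => -((t^2+1) * rexp (-t^2))/2) atTop (𝓝 0) := by
    have hsq : Tendsto (fun t : ℝ => t^2) atTop atTop := tendsto_pow_atTop two_ne_zero
    have h1 : Tendsto (fun t : ℝ => t^2 * rexp (-t^2)) atTop (𝓝 0) := by
      have := (tendsto_pow_mul_exp_neg_atTop_nhds_zero 1).comp hsq
      simpa [Function.comp_def] using this
    have h0 : Tendsto (fun t : ℝ => rexp (-t^2)) atTop (𝓝 0) :=
      tendsto_exp_neg_atTop_nhds_zero.comp hsq
    have := ((h1.add h0).neg).div_const 2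
    simpa [add_mul] using this
  have := integral_Ioi_of_hasDerivAt_of_tendsto' hderiv hint htend
  rw [this]
  norm_num

lemma integral_exp_sq : ∫ x : ℝ, rexp (-x^2) = √π := by
  have := integral_gaussian 1
  simpa using this

lemma integral_max_exp : ∫ x : ℝ, max x 0 * rexp (-x^2) = 1/2 := by
  have h : (fun x : ℝ => max x 0 * rexp (-x^2))
      = Set.indicator (Ioi (0:ℝ)) (fun x => x * rexp (-x^2)) := by
    funext x
    rcases le_or_gt x 0 with h0 | h0
    · rw [max_eq_right h0, Set.indicator_of_notMem (by simpa using h0)]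
      ring
    · rw [max_eq_left h0.le, Set.indicator_of_mem (by simpa using h0)]
  rw [h, integral_indicator measurableSet_Ioi, integral_x_exp]

lemma euclid_side :
    ∫ y : E3, max ⟪y, EuclideanSpace.single (2 : Fin 3) (1:ℝ)⟫ 0 * rexp (-‖y‖^2) = π/2 := by
  have MP := (EuclideanSpace.volume_preserving_symm_measurableEquiv_toLp (Fin 3)).symm
  rw [← MP.integral_comp']
  have hpt : ∀ x : Fin 3 → ℝ,
      max ⟪((MeasurableEquiv.toLp 2 (Fin 3 → ℝ)).symm.symm x : E3),
          EuclideanSpace.single (2 : Fin 3) (1:ℝ)⟫ 0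
        * rexp (-‖((MeasurableEquiv.toLp 2 (Fin 3 → ℝ)).symm.symm x : E3)‖^2)
      = ∏ i : Fin 3,
          (![fun t : ℝ => rexp (-t^2), fun t : ℝ => rexp (-t^2),
            fun t : ℝ => max t 0 * rexp (-t^2)] i) (x i) := by
    intro x
    have hcoord : ∀ i : Fin 3, ((MeasurableEquiv.toLp 2 (Fin 3 → ℝ)).symm.symm x : E3) i = x i :=
      fun i => rfl
    have hinner : ⟪((MeasurableEquiv.toLp 2 (Fin 3 → ℝ)).symm.symm x : E3),
        EuclideanSpace.single (2 : Fin 3) (1:ℝ)⟫ = x 2 := by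
      rw [EuclideanSpace.inner_single_right]
      simp [hcoord]
    have hnorm : ‖((MeasurableEquiv.toLp 2 (Fin 3 → ℝ)).symm.symm x : E3)‖^2
        = x 0^2 + x 1^2 + x 2^2 := by
      rw [EuclideanSpace.norm_eq, Real.sq_sqrt (by positivity)]
      simp [hcoord, Fin.sum_univ_three, sq_abs]
    rw [hinner, hnorm, Fin.prod_univ_three]
    simp only [Matrix.cons_val_zero, Matrix.cons_val_one, Matrix.head_cons,
      Matrix.cons_val_two, Matrix.tail_cons]
    rw [show -(x 0^2 + x 1^2 + x 2^2) = (-x 0^2) + (-x 1^2) + (-x 2^2) by ring,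
      Real.exp_add, Real.exp_add]
    ring
  rw [integral_congr_ae (Filter.Eventually.of_forall hpt)]
  rw [MeasureTheory.integral_fintype_prod_volume_eq_prod (ι := Fin 3)]
  rw [Fin.prod_univ_three]
  simp only [Matrix.cons_val_zero, Matrix.cons_val_one, Matrix.head_cons,
    Matrix.cons_val_two, Matrix.tail_cons]
  rw [integral_exp_sq, integral_max_exp]
  rw [show √π * √π * (1/2) = (√π * √π) / 2 by ring, Real.mul_self_sqrt pi_nonneg]

lemma nu_side : ∫ t : Ioi (0:ℝ), (t:ℝ) * rexp (-(t:ℝ)^2) ∂(Measure.volumeIoiPow 2) = 1/2 := by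
  rw [Measure.volumeIoiPow]
  simp only [ENNReal.ofReal]
  rw [integral_withDensity_eq_integral_smul ((measurable_subtype_coe.pow_const 2).real_toNNReal)]
  rw [integral_subtype_comap measurableSet_Ioi
    (fun a : ℝ => Real.toNNReal (a^2) • (a * rexp (-a^2)))]
  rw [setIntegral_congr_fun measurableSet_Ioi
    (g := fun a : ℝ => a^2 * (a * rexp (-a^2))) (fun a _ => by
      rw [NNReal.smul_def, Real.coe_toNNReal _ (sq_nonneg a), smul_eq_mul])]
  exact integral_x3_exp

lemma toSphere_posS :
    ∫ n : S2, posS (EuclideanSpace.single (2 : Fin 3) (1:ℝ)) n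
      ∂((volume : Measure E3).toSphere) = π := by
  have MP := (volume : Measure E3).measurePreserving_homeomorphUnitSphereProd
  have hfr : Module.finrank ℝ E3 - 1 = 2 := by
    simp [finrank_euclideanSpace]
  rw [hfr] at MP
  set H : S2 × Ioi (0:ℝ) → ℝ :=
    fun p => posS (EuclideanSpace.single (2 : Fin 3) (1:ℝ)) p.1 * ((p.2 : ℝ) * rexp (-(p.2:ℝ)^2))
    with hH
  have hcomp := MP.integral_comp (Homeomorph.measurableEmbedding _) H
  have hprod : ∫ p, H p ∂(((volume : Measure E3).toSphere).prod (Measure.volumeIoiPow 2))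
      = (∫ n : S2, posS (EuclideanSpace.single (2 : Fin 3) (1:ℝ)) n
          ∂((volume : Measure E3).toSphere)) * (1/2) := by
    rw [hH]
    rw [integral_prod_mul (f := posS (EuclideanSpace.single (2 : Fin 3) (1:ℝ)))
      (g := fun t : Ioi (0:ℝ) => (t:ℝ) * rexp (-(t:ℝ)^2)), nu_side]
  have hpt : ∀ x : ({(0:E3)}ᶜ : Set E3),
      H (homeomorphUnitSphereProd E3 x)
        = max ⟪(x : E3), EuclideanSpace.single (2 : Fin 3) (1:ℝ)⟫ 0 * rexp (-‖(x : E3)‖^2) := by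
    intro x
    have hx0 : (x : E3) ≠ 0 := x.2
    have hnx : ‖(x : E3)‖ ≠ 0 := norm_ne_zero_iff.2 hx0
    rw [hH]
    simp only [homeomorphUnitSphereProd_apply_fst_coe, homeomorphUnitSphereProd_apply_snd_coe,
      posS]
    rw [real_inner_smul_left]
    rw [show max (‖(x:E3)‖⁻¹ * ⟪(x:E3), EuclideanSpace.single (2 : Fin 3) (1:ℝ)⟫) 0
          * (‖(x:E3)‖ * rexp (-‖(x:E3)‖^2))
        = (max (‖(x:E3)‖⁻¹ * ⟪(x:E3), EuclideanSpace.single (2 : Fin 3) (1:ℝ)⟫) 0 * ‖(x:E3)‖)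
          * rexp (-‖(x:E3)‖^2) by ring]
    rw [max_mul_of_nonneg _ _ (norm_nonneg (x:E3)), zero_mul,
      show ‖(x:E3)‖⁻¹ * ⟪(x:E3), EuclideanSpace.single (2 : Fin 3) (1:ℝ)⟫ * ‖(x:E3)‖
        = ⟪(x:E3), EuclideanSpace.single (2 : Fin 3) (1:ℝ)⟫ * (‖(x:E3)‖⁻¹ * ‖(x:E3)‖) by ring,
      inv_mul_cancel₀ hnx, mul_one]
  rw [integral_congr_ae (Filter.Eventually.of_forall hpt)] at hcomp
  rw [integral_subtype_comap (measurableSet_singleton (0:E3)).compl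
    (fun y : E3 => max ⟪y, EuclideanSpace.single (2 : Fin 3) (1:ℝ)⟫ 0 * rexp (-‖y‖^2))] at hcomp
  rw [MeasureTheory.restrict_compl_singleton] at hcomp
  rw [euclid_side, hprod] at hcomp
  linarith [hcomp]

lemma key_quarter :
    ∫ n : S2, posS (EuclideanSpace.single (2 : Fin 3) (1:ℝ)) n ∂sphereMeasure = 1/4 := by
  rw [sphereMeasure, integral_smul_measure, toSphere_univ3, toSphere_posS]
  rw [ENNReal.toReal_inv, ENNReal.toReal_ofReal (by positivity), smul_eq_mul]
  rw [inv_mul_eq_div, div_eq_div_iff (by positivity) (by norm_num)]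
  ring


lemma integral_posS_quarter (r : EuclideanSpace ℝ (Fin 3)) (hr : ‖r‖ = 1) :
    ∫ n : S2, posS r n ∂sphereMeasure = 1/4 := by
  rw [integral_posS_const r (EuclideanSpace.single (2 : Fin 3) (1:ℝ)) hr (by simp)]
  exact key_quarter

end
end KSAux

/-- the Kochen–Specker model reproduces the Born rule: for unit vectors
`ŝ, r̂ ∈ ℝ³`, `∫_{S²} 4(n·ŝ)𝟙[n·ŝ ≥ 0] · 𝟙[n·r̂ ≥ 0] dσ(n) = (1 + r̂·ŝ)/2`. -/
theorem stmt_7 (s r : EuclideanSpace ℝ (Fin 3)) (hs : ‖s‖ = 1) (hr : ‖r‖ = 1) :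
    (∫ n : Metric.sphere (0 : EuclideanSpace ℝ (Fin 3)) 1,
        (4 * ⟪(n : EuclideanSpace ℝ (Fin 3)), s⟫ *
            (if 0 ≤ ⟪(n : EuclideanSpace ℝ (Fin 3)), s⟫ then 1 else 0)) *
          (if 0 ≤ ⟪(n : EuclideanSpace ℝ (Fin 3)), r⟫ then 1 else 0) ∂sphereMeasure)
      = (1 + ⟪r, s⟫) / 2 := by
  have hpt : ∀ n : Metric.sphere (0 : EuclideanSpace ℝ (Fin 3)) 1,
      (4 * ⟪(n : EuclideanSpace ℝ (Fin 3)), s⟫ *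
            (if 0 ≤ ⟪(n : EuclideanSpace ℝ (Fin 3)), s⟫ then 1 else 0)) *
          (if 0 ≤ ⟪(n : EuclideanSpace ℝ (Fin 3)), r⟫ then 1 else 0)
        = 4 * (posS s n * chiS r n) := by
    intro n
    have := inner_mul_chi s n
    unfold chiS posS at *
    rw [← this]
    ring
  rw [integral_congr_ae (Filter.Eventually.of_forall hpt), integral_const_mul,
    integral_posS_chi s r hs hr, integral_posS_quarter r hr]
  ring
end

section
/- For finitely many probability mass functions μ_z (z = 1,…,N) on a countable set Λ, and for any probability mass function ν on Λ with sup_λ μ_z(λ)/ν(λ) < ∞ for all z, one has Σ_λ max_z μ_z(λ) ≤ max_z sup_λ μ_z(λ)/ν(λ). Moreover, equality holds with the infimum over ν: Σ_λ max_z μ_z(λ) = inf_ν max_z sup_λ μ_z(λ)/ν(λ), achieved at ν_*(λ) = max_z μ_z(λ) / Σ_{λ'} max_z μ_z(λ'). -/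
open scoped ENNReal

/-- for probability mass functions `μ_1,…,μ_N` on a countable set `Λ`
(with `S = Σ_λ max_z μ_z(λ)` finite and positive), every probability mass function `ν`
with all exponentiated max-relative entropies `sup_λ μ_z(λ)/ν(λ)` finite satisfies
`S ≤ max_z sup_λ μ_z(λ)/ν(λ)`; moreover `S` equals the infimum of this quantity over all
probability mass functions `ν`, and the infimum is attained at
`ν_*(λ) = max_z μ_z(λ) / S`.  (Ratios are taken in `ℝ≥0∞`, so `0/0 = 0` and
`x/0 = ∞` for `x > 0`.) -/
theorem stmt_9 {Λ : Type*} [Countable Λ] (N : ℕ) (hN : 0 < N)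
    (μ : Fin N → Λ → ℝ≥0∞) (hμ : ∀ z, ∑' l, μ z l = 1)
    (S : ℝ≥0∞) (hS : S = ∑' l, ⨆ z, μ z l) (hSfin : S ≠ ⊤) (hSpos : 0 < S) :
    (∀ ν : Λ → ℝ≥0∞, (∑' l, ν l = 1) → (∀ z, (⨆ l, μ z l / ν l) < ⊤) →
        S ≤ ⨆ z, ⨆ l, μ z l / ν l) ∧
    (S = ⨅ ν : {ν : Λ → ℝ≥0∞ // ∑' l, ν l = 1}, ⨆ z, ⨆ l, μ z l / (ν : Λ → ℝ≥0∞) l) ∧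
    (⨆ z, ⨆ l, μ z l / ((⨆ z', μ z' l) / S)) = S := by
  haveI : Nonempty (Fin N) := Fin.pos_iff_nonempty.mp hN
  -- max of the μ's
  set M : Λ → ℝ≥0∞ := fun l => ⨆ z, μ z l with hMdef
  have hμle : ∀ z l, μ z l ≤ 1 := fun z l => (hμ z) ▸ ENNReal.le_tsum l
  have hMle : ∀ l, M l ≤ 1 := fun l => iSup_le fun z => hμle z l
  have hMfin : ∀ l, M l ≠ ⊤ := fun l => ne_top_of_le_ne_top ENNReal.one_ne_top (hMle l)
  -- Lower bound: for every pmf ν, S ≤ ⨆ z, ⨆ l, μ z l / ν l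
  have key : ∀ ν : Λ → ℝ≥0∞, (∑' l, ν l = 1) → S ≤ ⨆ z, ⨆ l, μ z l / ν l := by
    intro ν hν
    set C := ⨆ z, ⨆ l, μ z l / ν l with hC
    by_cases hCtop : C = ⊤
    · exact hCtop ▸ le_top
    have hνl : ∀ l, ν l ≠ ⊤ := fun l =>
      ne_top_of_le_ne_top ENNReal.one_ne_top (hν ▸ ENNReal.le_tsum l)
    have hle : ∀ z l, μ z l ≤ C * ν l := by
      intro z l
      have hr : μ z l / ν l ≤ C :=
        le_iSup₂ (f := fun z l => μ z l / ν l) z l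
      by_cases h0 : ν l = 0
      · by_cases hμ0 : μ z l = 0
        · simp [hμ0]
        · exfalso
          rw [h0, ENNReal.div_zero hμ0] at hr
          exact hCtop (top_le_iff.mp hr)
      · rwa [ENNReal.div_le_iff h0 (hνl l)] at hr
    calc S = ∑' l, M l := hS
      _ ≤ ∑' l, C * ν l := ENNReal.tsum_le_tsum fun l => iSup_le fun z => hle z l
      _ = C * ∑' l, ν l := ENNReal.tsum_mul_left
      _ = C := by rw [hν, mul_one]
  -- Part 3: value at ν_* is S
  have p3 : (⨆ z, ⨆ l, μ z l / ((⨆ z', μ z' l) / S)) = S := by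
    rw [iSup_comm]
    have hval : ∀ l, (⨆ z, μ z l / ((⨆ z', μ z' l) / S)) = M l / (M l / S) := by
      intro l
      rw [← ENNReal.iSup_div]
    have hcase : ∀ l, M l / (M l / S) = if M l = 0 then 0 else S := by
      intro l
      by_cases h0 : M l = 0
      · simp [h0]
      · rw [if_neg h0, div_eq_mul_inv (M l) (M l / S), div_eq_mul_inv (M l) S,
          ENNReal.mul_inv (Or.inl h0) (Or.inr (ENNReal.inv_ne_zero.mpr hSfin)),
          inv_inv, ← mul_assoc, ENNReal.mul_inv_cancel h0 (hMfin l), one_mul]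
    have hex : ∃ l, M l ≠ 0 := by
      by_contra h
      push_neg at h
      have : S = 0 := by rw [hS]; exact (ENNReal.summable.tsum_eq_zero_iff).mpr h
      exact hSpos.ne' this
    obtain ⟨l0, hl0⟩ := hex
    apply le_antisymm
    · refine iSup_le fun l => ?_
      rw [hval l, hcase l]
      split <;> simp
    · calc S = M l0 / (M l0 / S) := by rw [hcase l0, if_neg hl0]
        _ = ⨆ z, μ z l0 / ((⨆ z', μ z' l0) / S) := (hval l0).symm
        _ ≤ _ := le_iSup (fun j => ⨆ i, μ i j / ((⨆ z', μ z' j) / S)) l0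
  refine ⟨fun ν hν _ => key ν hν, ?_, p3⟩
  -- Part 2
  have hpmf : ∑' l, ((⨆ z', μ z' l) / S) = 1 := by
    have : ∑' l, ((⨆ z', μ z' l) / S) = (∑' l, ⨆ z', μ z' l) / S := by
      simp only [div_eq_mul_inv]
      exact ENNReal.tsum_mul_right
    rw [this, ← hS, ENNReal.div_self hSpos.ne' hSfin]
  apply le_antisymm
  · exact le_iInf fun ν => key ν ν.2
  · calc (⨅ ν : {ν : Λ → ℝ≥0∞ // ∑' l, ν l = 1}, ⨆ z, ⨆ l, μ z l / (ν : Λ → ℝ≥0∞) l)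
        ≤ ⨆ z, ⨆ l, μ z l / ((⨆ z', μ z' l) / S) :=
          iInf_le _ (⟨fun l => (⨆ z', μ z' l) / S, hpmf⟩ : {ν : Λ → ℝ≥0∞ // ∑' l, ν l = 1})
      _ = S := p3
end

section
/- Guessing-probability bound in an ontological model: let Λ be a finite set, let μ_{(k,x)} (k = 1,…,n; x = 1,…,d) be probability mass functions on Λ, and let ξ_k(·|λ) be, for each k and λ ∈ Λ, a probability distribution on {1,…,d}. Define P_guess = (1/(nd)) Σ_{k,x} Σ_λ ξ_k(x|λ) μ_{(k,x)}(λ) and, for each string x⃗ ∈ {1,…,d}^n, μ_{x⃗} = (1/n) Σ_k μ_{(k, x⃗_k)}. Then P_guess ≤ (1/d) Σ_λ max_{x⃗} μ_{x⃗}(λ) and P_guess ≤ 1 − ((d−1)/d) Σ_λ min_{x⃗} μ_{x⃗}(λ). -/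
/-- guessing-probability bounds in an ontological model.  With
`P_guess = (1/(nd)) Σ_{k,x,λ} ξ_k(x|λ) μ_{(k,x)}(λ)` and
`μ_{x⃗} = (1/n) Σ_k μ_{(k,x⃗_k)}` for strings `x⃗ ∈ {1,…,d}ⁿ`, one has
`P_guess ≤ (1/d) Σ_λ max_{x⃗} μ_{x⃗}(λ)` and
`P_guess ≤ 1 − ((d−1)/d) Σ_λ min_{x⃗} μ_{x⃗}(λ)`. -/
theorem stmt_18 {Λ : Type*} [Fintype Λ] (n d : ℕ) (hn : 0 < n) (hd : 0 < d)
    (μ : Fin n → Fin d → Λ → ℝ)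
    (hμ0 : ∀ k x l, 0 ≤ μ k x l) (hμ1 : ∀ k x, ∑ l, μ k x l = 1)
    (ξ : Fin n → Λ → Fin d → ℝ)
    (hξ0 : ∀ k l x, 0 ≤ ξ k l x) (hξ1 : ∀ k l, ∑ x, ξ k l x = 1)
    (Pguess : ℝ)
    (hP : Pguess = (1 / (n * d : ℝ)) * ∑ k, ∑ x, ∑ l, ξ k l x * μ k x l)
    (μmix : (Fin n → Fin d) → Λ → ℝ)
    (hμmix : ∀ xs l, μmix xs l = (1 / (n : ℝ)) * ∑ k, μ k (xs k) l) :
    Pguess ≤ (1 / (d : ℝ)) * ∑ l,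
        Finset.univ.sup' (Finset.univ_nonempty_iff.mpr ⟨fun _ => ⟨0, hd⟩⟩)
          (fun xs : Fin n → Fin d => μmix xs l) ∧
    Pguess ≤ 1 - ((d : ℝ) - 1) / d * ∑ l,
        Finset.univ.inf' (Finset.univ_nonempty_iff.mpr ⟨fun _ => ⟨0, hd⟩⟩)
          (fun xs : Fin n → Fin d => μmix xs l) := by
  have hn' : (0:ℝ) < n := by exact_mod_cast hn
  have hd' : (0:ℝ) < d := by exact_mod_cast hd
  have hswap : (∑ k, ∑ x, ∑ l, ξ k l x * μ k x l)
      = ∑ l, ∑ k, ∑ x, ξ k l x * μ k x l := by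
    have h1 : ∀ k : Fin n, ∑ x, ∑ l, ξ k l x * μ k x l
        = ∑ l, ∑ x, ξ k l x * μ k x l := fun k => Finset.sum_comm
    simp_rw [h1]
    exact Finset.sum_comm
  constructor
  · -- first bound
    set S : ℝ := ∑ l, Finset.univ.sup'
        (Finset.univ_nonempty_iff.mpr ⟨fun _ => ⟨0, hd⟩⟩)
        (fun xs : Fin n → Fin d => μmix xs l) with hS
    have key : ∀ l : Λ, ∑ k, ∑ x, ξ k l x * μ k x l ≤
        (n : ℝ) * Finset.univ.sup'
          (Finset.univ_nonempty_iff.mpr ⟨fun _ => ⟨0, hd⟩⟩)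
          (fun xs : Fin n → Fin d => μmix xs l) := by
      intro l
      have hex : ∀ k : Fin n, ∃ x0 : Fin d, ∀ x, μ k x l ≤ μ k x0 l := by
        intro k
        obtain ⟨x0, -, hx0⟩ := Finset.exists_max_image Finset.univ
          (fun x => μ k x l) ⟨⟨0, hd⟩, Finset.mem_univ _⟩
        exact ⟨x0, fun x => hx0 x (Finset.mem_univ x)⟩
      choose xs hxs using hex
      calc ∑ k, ∑ x, ξ k l x * μ k x l
          ≤ ∑ k, ∑ x, ξ k l x * μ k (xs k) l := by
            refine Finset.sum_le_sum fun k _ => Finset.sum_le_sum fun x _ => ?_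
            exact mul_le_mul_of_nonneg_left (hxs k x) (hξ0 k l x)
        _ = ∑ k, μ k (xs k) l := by
            refine Finset.sum_congr rfl fun k _ => ?_
            rw [← Finset.sum_mul, hξ1, one_mul]
        _ = (n : ℝ) * μmix xs l := by
            rw [hμmix]; field_simp
        _ ≤ _ := by
            refine mul_le_mul_of_nonneg_left ?_ hn'.le
            exact Finset.le_sup' (fun xs => μmix xs l) (Finset.mem_univ xs)
    have hT : (∑ k, ∑ x, ∑ l, ξ k l x * μ k x l) ≤ (n : ℝ) * S := by
      rw [hswap, hS, Finset.mul_sum]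
      exact Finset.sum_le_sum fun l _ => key l
    rw [hP]
    have h1 : (1 / ((n:ℝ) * d)) * (∑ k, ∑ x, ∑ l, ξ k l x * μ k x l)
        ≤ (1 / ((n:ℝ) * d)) * ((n : ℝ) * S) :=
      mul_le_mul_of_nonneg_left hT (by positivity)
    have h2 : (1 / ((n:ℝ) * d)) * ((n : ℝ) * S) = (1 / (d:ℝ)) * S := by
      field_simp
    linarith
  · -- second bound
    set I : ℝ := ∑ l, Finset.univ.inf'
        (Finset.univ_nonempty_iff.mpr ⟨fun _ => ⟨0, hd⟩⟩)
        (fun xs : Fin n → Fin d => μmix xs l) with hI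
    have key : ∀ l : Λ, ∑ k, ∑ x, ξ k l x * μ k x l ≤
        (∑ k, ∑ x, μ k x l) - ((d : ℝ) - 1) * ((n : ℝ) *
          Finset.univ.inf' (Finset.univ_nonempty_iff.mpr ⟨fun _ => ⟨0, hd⟩⟩)
            (fun xs : Fin n → Fin d => μmix xs l)) := by
      intro l
      have hex : ∀ k : Fin n, ∃ x0 : Fin d, ∀ x, μ k x0 l ≤ μ k x l := by
        intro k
        obtain ⟨x0, -, hx0⟩ := Finset.exists_min_image Finset.univ
          (fun x => μ k x l) ⟨⟨0, hd⟩, Finset.mem_univ _⟩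
        exact ⟨x0, fun x => hx0 x (Finset.mem_univ x)⟩
      choose xm hxm using hex
      have step : ∀ k : Fin n, ∑ x, ξ k l x * μ k x l ≤
          (∑ x, μ k x l) - ((d : ℝ) - 1) * μ k (xm k) l := by
        intro k
        have hb : ∀ x : Fin d, μ k x l ≤
            (∑ x', μ k x' l) - ((d : ℝ) - 1) * μ k (xm k) l := by
          intro x
          have h1 : ∑ x' ∈ Finset.univ.erase x, μ k x' l
              = (∑ x', μ k x' l) - μ k x l :=
            Finset.sum_erase_eq_sub (Finset.mem_univ x)
          have h2 : ((d : ℝ) - 1) * μ k (xm k) l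
              ≤ ∑ x' ∈ Finset.univ.erase x, μ k x' l := by
            have hc : (Finset.univ.erase x).card = d - 1 := by
              rw [Finset.card_erase_of_mem (Finset.mem_univ x), Finset.card_univ,
                Fintype.card_fin]
            calc ((d : ℝ) - 1) * μ k (xm k) l
                = ∑ _x' ∈ Finset.univ.erase x, μ k (xm k) l := by
                  rw [Finset.sum_const, hc, nsmul_eq_mul,
                    Nat.cast_sub hd, Nat.cast_one]
              _ ≤ ∑ x' ∈ Finset.univ.erase x, μ k x' l :=
                  Finset.sum_le_sum fun x' _ => hxm k x'
          linarith
        calc ∑ x, ξ k l x * μ k x l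
            ≤ ∑ x, ξ k l x * ((∑ x', μ k x' l) - ((d : ℝ) - 1) * μ k (xm k) l) :=
              Finset.sum_le_sum fun x _ =>
                mul_le_mul_of_nonneg_left (hb x) (hξ0 k l x)
          _ = (∑ x', μ k x' l) - ((d : ℝ) - 1) * μ k (xm k) l := by
              rw [← Finset.sum_mul, hξ1, one_mul]
      have hmin : ((d : ℝ) - 1) * ((n : ℝ) *
          Finset.univ.inf' (Finset.univ_nonempty_iff.mpr ⟨fun _ => ⟨0, hd⟩⟩)
            (fun xs : Fin n → Fin d => μmix xs l))
          ≤ ((d : ℝ) - 1) * ∑ k, μ k (xm k) l := by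
        have hd1 : (1:ℝ) ≤ d := by exact_mod_cast hd
        refine mul_le_mul_of_nonneg_left ?_ (by linarith)
        have h3 : (n : ℝ) * μmix xm l = ∑ k, μ k (xm k) l := by
          rw [hμmix]; field_simp
        rw [← h3]
        refine mul_le_mul_of_nonneg_left ?_ hn'.le
        exact Finset.inf'_le _ (Finset.mem_univ xm)
      calc ∑ k, ∑ x, ξ k l x * μ k x l
          ≤ ∑ k, ((∑ x, μ k x l) - ((d : ℝ) - 1) * μ k (xm k) l) :=
            Finset.sum_le_sum fun k _ => step k
        _ = (∑ k, ∑ x, μ k x l) - ((d : ℝ) - 1) * ∑ k, μ k (xm k) l := by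
            rw [Finset.sum_sub_distrib, Finset.mul_sum]
        _ ≤ _ := by linarith
    have htot : (∑ l, ∑ k, ∑ x, μ k x l) = (n : ℝ) * d := by
      rw [Finset.sum_comm]
      have : ∀ k : Fin n, ∑ l, ∑ x, μ k x l = (d : ℝ) := by
        intro k
        rw [Finset.sum_comm]
        simp [hμ1]
      simp [this]
    have hT : (∑ k, ∑ x, ∑ l, ξ k l x * μ k x l)
        ≤ (n : ℝ) * d - ((d : ℝ) - 1) * ((n : ℝ) * I) := by
      rw [hswap]
      calc ∑ l, ∑ k, ∑ x, ξ k l x * μ k x l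
          ≤ ∑ l, ((∑ k, ∑ x, μ k x l) - ((d : ℝ) - 1) * ((n : ℝ) *
              Finset.univ.inf' (Finset.univ_nonempty_iff.mpr ⟨fun _ => ⟨0, hd⟩⟩)
                (fun xs : Fin n → Fin d => μmix xs l))) :=
            Finset.sum_le_sum fun l _ => key l
        _ = (∑ l, ∑ k, ∑ x, μ k x l) - ((d : ℝ) - 1) * ((n : ℝ) * I) := by
            rw [Finset.sum_sub_distrib, hI, Finset.mul_sum, Finset.mul_sum]
        _ = _ := by rw [htot]
    rw [hP]
    have h1 : (1 / ((n:ℝ) * d)) * (∑ k, ∑ x, ∑ l, ξ k l x * μ k x l)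
        ≤ (1 / ((n:ℝ) * d)) * ((n : ℝ) * d - ((d : ℝ) - 1) * ((n : ℝ) * I)) :=
      mul_le_mul_of_nonneg_left hT (by positivity)
    have h2 : (1 / ((n:ℝ) * d)) * ((n : ℝ) * d - ((d : ℝ) - 1) * ((n : ℝ) * I))
        = 1 - ((d : ℝ) - 1) / d * I := by
      field_simp
    linarith
end
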